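/- arXiv:1006.2966 — 3 statements merged into one kernel-verified Lean document; each statement's English description precedes it below -/
import Mathlib

section
/- Let U be an open subset of ℂⁿ and let ℓ₁, …, ℓ_m : U → ℝ be C² (smooth) functions that are everywhere strictly positive, and set S = ℓ₁ + ⋯ + ℓ_m. Then for every point p ∈ U and every vector v ∈ ℂⁿ, the Levi quantity of log S satisfies Λ(log S)(p, v) ≥ (1 / S(p)) · Σ_{j=1}^{m} ℓ_j(p) · Λ(log ℓ_j)(p, v). (This is the estimate of closed hermitian (1,1)-forms √−1 ∂∂̄ log(Σ_j ℓ_j) ≥ (1/Σ_k ℓ_k) Σ_j ℓ_j √−1 ∂∂̄ log ℓ_j.) -/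
/-!
For `f > 0`, `f · Λ(log f) = Λf − ((Df v)² + (Df(iv))²) / f`. The Levi quantity is additive, so with
`S = Σ ℓⱼ` the claim `S · Λ(log S) ≥ Σ ℓⱼ Λ(log ℓⱼ)` reduces to
`((Σ aⱼ)² + (Σ bⱼ)²) / Σ ℓⱼ ≤ Σ (aⱼ² + bⱼ²) / ℓⱼ` for the first derivatives `aⱼ = Dℓⱼ v`,
`bⱼ = Dℓⱼ (iv)`, which is the Cauchy–Schwarz inequality in Sedrakyan's form.
-/

/-- The Levi quantity of a real-valued function `f` on `ℂⁿ` at a point `p` in direction `v`: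
`Λ(f)(p, v) = D²f(p)(v, v) + D²f(p)(iv, iv)`, where `D²f(p)` is the second real Fréchet
derivative of `f` at `p`. -/
noncomputable def leviQuantity {n : ℕ} (f : EuclideanSpace ℂ (Fin n) → ℝ)
    (p v : EuclideanSpace ℂ (Fin n)) : ℝ :=
  fderiv ℝ (fderiv ℝ f) p v v +
    fderiv ℝ (fderiv ℝ f) p (Complex.I • v) (Complex.I • v)

open Filter Topology

section SecondDerivative

variable {E : Type*} [NormedAddCommGroup E] [NormedSpace ℝ E] {p : E}

theorem mul_fderiv_fderiv_log_apply {f : E → ℝ} (hf : ContDiffAt ℝ 2 f p) (hfp : f p ≠ 0)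
    (w : E) :
    f p * fderiv ℝ (fderiv ℝ fun x => Real.log (f x)) p w w =
      fderiv ℝ (fderiv ℝ f) p w w - fderiv ℝ f p w ^ 2 / f p := by
  have hDlog : fderiv ℝ (fun x => Real.log (f x)) =ᶠ[𝓝 p] fun x => (f x)⁻¹ • fderiv ℝ f x := by
    filter_upwards [hf.eventually (by simp), hf.continuousAt.eventually_ne hfp] with x hx hfx
    exact ((hx.differentiableAt two_ne_zero).hasFDerivAt.log hfx).fderiv
  have hinv : HasFDerivAt (fun x => (f x)⁻¹) (-(f p ^ 2)⁻¹ • fderiv ℝ f p) p :=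
    (hasDerivAt_inv hfp).comp_hasFDerivAt p (hf.differentiableAt two_ne_zero).hasFDerivAt
  have hDf : DifferentiableAt ℝ (fderiv ℝ f) p :=
    (hf.fderiv_right le_rfl).differentiableAt one_ne_zero
  rw [hDlog.fderiv_eq, fderiv_fun_smul hinv.differentiableAt hDf, hinv.fderiv]
  simp only [_root_.add_apply, _root_.smul_apply,
    ContinuousLinearMap.smulRight_apply, smul_eq_mul]
  field_simp
  ring

theorem fderiv_fderiv_sum {ι : Type*} {s : Finset ι} {f : ι → E → ℝ}
    (hf : ∀ i ∈ s, ContDiffAt ℝ 2 (f i) p) :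
    fderiv ℝ (fderiv ℝ fun x => ∑ i ∈ s, f i x) p = ∑ i ∈ s, fderiv ℝ (fderiv ℝ (f i)) p := by
  have hDsum : fderiv ℝ (fun x => ∑ i ∈ s, f i x) =ᶠ[𝓝 p] fun x => ∑ i ∈ s, fderiv ℝ (f i) x := by
    have := (s.eventually_all).2 fun i hi => (hf i hi).eventually (by simp)
    filter_upwards [this] with x hx
    exact fderiv_fun_sum fun i hi => (hx i hi).differentiableAt two_ne_zero
  rw [hDsum.fderiv_eq]
  exact fderiv_fun_sum fun i hi => ((hf i hi).fderiv_right le_rfl).differentiableAt one_ne_zero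

end SecondDerivative

theorem Finset.sq_sum_add_sq_sum_div_le {ι : Type*} (s : Finset ι) (a b : ι → ℝ) {g : ι → ℝ}
    (hg : ∀ i ∈ s, 0 < g i) :
    ((∑ i ∈ s, a i) ^ 2 + (∑ i ∈ s, b i) ^ 2) / ∑ i ∈ s, g i ≤
      ∑ i ∈ s, (a i ^ 2 + b i ^ 2) / g i := by
  simp only [add_div, Finset.sum_add_distrib]
  exact add_le_add (s.sq_sum_div_le_sum_sq_div a hg) (s.sq_sum_div_le_sum_sq_div b hg)

section Levi

variable {n : ℕ} {p : EuclideanSpace ℂ (Fin n)}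

theorem mul_leviQuantity_log {f : EuclideanSpace ℂ (Fin n) → ℝ} (hf : ContDiffAt ℝ 2 f p)
    (hfp : f p ≠ 0) (v : EuclideanSpace ℂ (Fin n)) :
    f p * leviQuantity (fun x => Real.log (f x)) p v =
      leviQuantity f p v - (fderiv ℝ f p v ^ 2 + fderiv ℝ f p (Complex.I • v) ^ 2) / f p := by
  rw [leviQuantity, leviQuantity, mul_add, mul_fderiv_fderiv_log_apply hf hfp,
    mul_fderiv_fderiv_log_apply hf hfp]
  ring

theorem leviQuantity_sum {ι : Type*} {s : Finset ι} {f : ι → EuclideanSpace ℂ (Fin n) → ℝ}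
    (hf : ∀ i ∈ s, ContDiffAt ℝ 2 (f i) p) (v : EuclideanSpace ℂ (Fin n)) :
    leviQuantity (fun x => ∑ i ∈ s, f i x) p v = ∑ i ∈ s, leviQuantity (f i) p v := by
  simp only [leviQuantity, fderiv_fderiv_sum hf, _root_.sum_apply,
    Finset.sum_add_distrib]

end Levi

/-- For positive C² functions `ℓ₁, …, ℓ_m` on an open set `U ⊆ ℂⁿ` with sum `S`,
the Levi quantity of `log S` is bounded below by
`(1 / S(p)) · Σ_j ℓ_j(p) · Λ(log ℓ_j)(p, v)`. -/
theorem levi_log_sum_ge {n m : ℕ} (U : Set (EuclideanSpace ℂ (Fin n))) (hU : IsOpen U)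
    (ℓ : Fin m → EuclideanSpace ℂ (Fin n) → ℝ)
    (hC2 : ∀ j, ContDiffOn ℝ 2 (ℓ j) U)
    (hpos : ∀ j, ∀ p ∈ U, 0 < ℓ j p)
    (S : EuclideanSpace ℂ (Fin n) → ℝ)
    (hS : S = fun p => ∑ j, ℓ j p) :
    ∀ p ∈ U, ∀ v : EuclideanSpace ℂ (Fin n),
      leviQuantity (fun x => Real.log (S x)) p v ≥
        (1 / S p) * ∑ j, ℓ j p * leviQuantity (fun x => Real.log (ℓ j x)) p v := by
  intro p hp v
  subst hS
  rcases isEmpty_or_nonempty (Fin m) with _ | _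
  -- `S ≡ 0` and `Real.log 0 = 0`, so both sides vanish
  · simp [leviQuantity]
  have hℓ : ∀ j ∈ Finset.univ, ContDiffAt ℝ 2 (ℓ j) p :=
    fun j _ => (hC2 j).contDiffAt (hU.mem_nhds hp)
  have hℓp : ∀ j ∈ Finset.univ, 0 < ℓ j p := fun j _ => hpos j p hp
  have hSp : 0 < ∑ j, ℓ j p := Finset.sum_pos hℓp Finset.univ_nonempty
  have hD : ∀ w, fderiv ℝ (fun x => ∑ j, ℓ j x) p w = ∑ j, fderiv ℝ (ℓ j) p w := fun w => by
    rw [fderiv_fun_sum fun j hj => (hℓ j hj).differentiableAt two_ne_zero,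
      _root_.sum_apply]
  have key : ∑ j, ℓ j p * leviQuantity (fun x => Real.log (ℓ j x)) p v ≤
      (∑ j, ℓ j p) * leviQuantity (fun x => Real.log (∑ j, ℓ j x)) p v := by
    rw [mul_leviQuantity_log (ContDiffAt.sum hℓ) hSp.ne', leviQuantity_sum hℓ, hD, hD,
      Finset.sum_congr rfl fun j hj => mul_leviQuantity_log (hℓ j hj) (hℓp j hj).ne' v,
      Finset.sum_sub_distrib]
    exact sub_le_sub_left (Finset.univ.sq_sum_add_sq_sum_div_le _ _ hℓp) _
  calc (1 / ∑ j, ℓ j p) * ∑ j, ℓ j p * leviQuantity (fun x => Real.log (ℓ j x)) p v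
      ≤ (1 / ∑ j, ℓ j p) * ((∑ j, ℓ j p) * leviQuantity (fun x => Real.log (∑ j, ℓ j x)) p v) :=
        mul_le_mul_of_nonneg_left key (by positivity)
    _ = _ := by field_simp
end

section
/- Let U be an open subset of ℂⁿ and let ℓ₁, …, ℓ_m : U → ℝ be C² (smooth) functions that are everywhere strictly positive, and set S = ℓ₁ + ⋯ + ℓ_m. If for every j, every point p ∈ U and every vector v ∈ ℂⁿ one has Λ(log ℓ_j)(p, v) ≥ 0 (i.e. each log ℓ_j is plurisubharmonic), then Λ(log S)(p, v) ≥ 0 for every p ∈ U and v ∈ ℂⁿ, i.e. the logarithm of the sum is plurisubharmonic. -/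
/-! For positive `f`, `f² Λ(log f) = f Λ(f) - ((Df v)² + (Df (iv))²)`, so `log f` is
plurisubharmonic exactly when `(Df v)² + (Df (iv))² ≤ f Λ(f)`. Both `Df` and `Λ` are additive
in `f`, and by Cauchy–Schwarz in Sedrakyan's form `(Σ a)² / Σ L ≤ Σ a² / L` this inequality
survives summation. -/

open Filter Topology

theorem Finset.sq_sum_add_sq_sum_le_sum_mul_sum {ι : Type*} (s : Finset ι) {L a b c : ι → ℝ}
    (hL : ∀ j ∈ s, 0 < L j) (h : ∀ j ∈ s, a j ^ 2 + b j ^ 2 ≤ L j * c j) :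
    (∑ j ∈ s, a j) ^ 2 + (∑ j ∈ s, b j) ^ 2 ≤ (∑ j ∈ s, L j) * ∑ j ∈ s, c j := by
  rcases s.eq_empty_or_nonempty with rfl | hs
  · simp
  have hLsum : 0 < ∑ j ∈ s, L j := Finset.sum_pos hL hs
  rw [← div_le_iff₀' hLsum, add_div]
  calc (∑ j ∈ s, a j) ^ 2 / ∑ j ∈ s, L j + (∑ j ∈ s, b j) ^ 2 / ∑ j ∈ s, L j
      ≤ ∑ j ∈ s, a j ^ 2 / L j + ∑ j ∈ s, b j ^ 2 / L j :=
        add_le_add (s.sq_sum_div_le_sum_sq_div a hL) (s.sq_sum_div_le_sum_sq_div b hL)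
    _ = ∑ j ∈ s, (a j ^ 2 + b j ^ 2) / L j := by simp only [← Finset.sum_add_distrib, add_div]
    _ ≤ ∑ j ∈ s, c j :=
        Finset.sum_le_sum fun j hj => (div_le_iff₀' (hL j hj)).2 (h j hj)

section SecondDerivative

variable {𝕜 E F : Type*} [NontriviallyNormedField 𝕜] [NormedAddCommGroup E] [NormedSpace 𝕜 E]
  [NormedAddCommGroup F] [NormedSpace 𝕜 F]

theorem ContDiffAt.differentiableAt_fderiv {f : E → F} {p : E} (hf : ContDiffAt 𝕜 2 f p) :
    DifferentiableAt 𝕜 (fderiv 𝕜 f) p :=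
  (hf.fderiv_right (m := 1) le_rfl).differentiableAt one_ne_zero

theorem fderiv_fderiv_fun_sum {ι : Type*} (s : Finset ι) {f : ι → E → F} {p : E}
    (hf : ∀ j ∈ s, ContDiffAt 𝕜 2 (f j) p) :
    fderiv 𝕜 (fderiv 𝕜 (fun x => ∑ j ∈ s, f j x)) p = ∑ j ∈ s, fderiv 𝕜 (fderiv 𝕜 (f j)) p := by
  have hnear : ∀ᶠ x in 𝓝 p, ∀ j ∈ s, DifferentiableAt 𝕜 (f j) x :=
    s.eventually_all.2 fun j hj =>
      (hf j hj).eventually (by simp) |>.mono fun x hx => hx.differentiableAt two_ne_zero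
  have hfderiv : fderiv 𝕜 (fun x => ∑ j ∈ s, f j x) =ᶠ[𝓝 p] fun x => ∑ j ∈ s, fderiv 𝕜 (f j) x :=
    hnear.mono fun x hx => fderiv_fun_sum hx
  rw [hfderiv.fderiv_eq]
  exact fderiv_fun_sum fun j hj => (hf j hj).differentiableAt_fderiv

end SecondDerivative

section Log

variable {E : Type*} [NormedAddCommGroup E] [NormedSpace ℝ E]

theorem sq_mul_fderiv_fderiv_log_apply {f : E → ℝ} {p : E} (hf : ContDiffAt ℝ 2 f p)
    (hp : f p ≠ 0) (w : E) :
    f p ^ 2 * fderiv ℝ (fderiv ℝ (fun x => Real.log (f x))) p w w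
      = f p * fderiv ℝ (fderiv ℝ f) p w w - fderiv ℝ f p w ^ 2 := by
  have hfderiv : fderiv ℝ (fun x => Real.log (f x)) =ᶠ[𝓝 p]
      fun x => (f x)⁻¹ • fderiv ℝ f x := by
    filter_upwards [hf.continuousAt.eventually_ne hp, hf.eventually (by simp)] with x hx hfx
    exact ((hfx.differentiableAt two_ne_zero).hasFDerivAt.log hx).fderiv
  have hinv : HasFDerivAt (fun x => (f x)⁻¹) ((-(f p ^ 2)⁻¹) • fderiv ℝ f p) p :=
    (hasDerivAt_inv hp).comp_hasFDerivAt p (hf.differentiableAt two_ne_zero).hasFDerivAt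
  have hD2 := hinv.fun_smul hf.differentiableAt_fderiv.hasFDerivAt
  rw [hfderiv.fderiv_eq, hD2.fderiv]
  simp only [_root_.add_apply, _root_.smul_apply, ContinuousLinearMap.smulRight_apply,
    smul_eq_mul]
  field_simp
  ring

end Log

section Levi

variable {n : ℕ}

theorem leviQuantity_fun_sum {ι : Type*} (s : Finset ι) {f : ι → EuclideanSpace ℂ (Fin n) → ℝ}
    {p : EuclideanSpace ℂ (Fin n)} (hf : ∀ j ∈ s, ContDiffAt ℝ 2 (f j) p)
    (v : EuclideanSpace ℂ (Fin n)) :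
    leviQuantity (fun x => ∑ j ∈ s, f j x) p v = ∑ j ∈ s, leviQuantity (f j) p v := by
  simp only [leviQuantity, fderiv_fderiv_fun_sum s hf, _root_.sum_apply,
    Finset.sum_add_distrib]

theorem sq_mul_leviQuantity_log {f : EuclideanSpace ℂ (Fin n) → ℝ}
    {p : EuclideanSpace ℂ (Fin n)} (hf : ContDiffAt ℝ 2 f p) (hp : f p ≠ 0)
    (v : EuclideanSpace ℂ (Fin n)) :
    f p ^ 2 * leviQuantity (fun x => Real.log (f x)) p v
      = f p * leviQuantity f p v
        - (fderiv ℝ f p v ^ 2 + fderiv ℝ f p (Complex.I • v) ^ 2) := by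
  rw [leviQuantity, leviQuantity, mul_add, sq_mul_fderiv_fderiv_log_apply hf hp,
    sq_mul_fderiv_fderiv_log_apply hf hp]
  ring

theorem leviQuantity_log_nonneg_iff {f : EuclideanSpace ℂ (Fin n) → ℝ}
    {p : EuclideanSpace ℂ (Fin n)} (hf : ContDiffAt ℝ 2 f p) (hp : 0 < f p)
    (v : EuclideanSpace ℂ (Fin n)) :
    0 ≤ leviQuantity (fun x => Real.log (f x)) p v
      ↔ fderiv ℝ f p v ^ 2 + fderiv ℝ f p (Complex.I • v) ^ 2 ≤ f p * leviQuantity f p v := by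
  rw [← mul_nonneg_iff_of_pos_left (pow_pos hp 2), sq_mul_leviQuantity_log hf hp.ne', sub_nonneg]

end Levi

/-- If `ℓ₁, …, ℓ_m` are positive C² functions on an open set `U ⊆ ℂⁿ` such that each
`log ℓ_j` is plurisubharmonic (its Levi quantity is nonnegative), then the logarithm of
the sum `S = ℓ₁ + ⋯ + ℓ_m` is plurisubharmonic. -/
theorem levi_log_sum_nonneg {n m : ℕ} (U : Set (EuclideanSpace ℂ (Fin n))) (hU : IsOpen U)
    (ℓ : Fin m → EuclideanSpace ℂ (Fin n) → ℝ)
    (hC2 : ∀ j, ContDiffOn ℝ 2 (ℓ j) U)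
    (hpos : ∀ j, ∀ p ∈ U, 0 < ℓ j p)
    (S : EuclideanSpace ℂ (Fin n) → ℝ)
    (hS : S = fun p => ∑ j, ℓ j p)
    (hpsh : ∀ j, ∀ p ∈ U, ∀ v : EuclideanSpace ℂ (Fin n),
      0 ≤ leviQuantity (fun x => Real.log (ℓ j x)) p v) :
    ∀ p ∈ U, ∀ v : EuclideanSpace ℂ (Fin n),
      0 ≤ leviQuantity (fun x => Real.log (S x)) p v := by
  intro p hp v
  subst hS
  rcases isEmpty_or_nonempty (Fin m) with _ | _
  · -- `S = 0` and `Real.log 0 = 0`, so `log S` is constant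
    simp [leviQuantity]
  have hℓ : ∀ j ∈ Finset.univ, ContDiffAt ℝ 2 (ℓ j) p :=
    fun j _ => (hC2 j).contDiffAt (hU.mem_nhds hp)
  have hSpos : 0 < ∑ j, ℓ j p := Finset.sum_pos (fun j _ => hpos j p hp) Finset.univ_nonempty
  have hfderiv : fderiv ℝ (fun x => ∑ j, ℓ j x) p = ∑ j, fderiv ℝ (ℓ j) p :=
    fderiv_fun_sum fun j hj => (hℓ j hj).differentiableAt two_ne_zero
  rw [leviQuantity_log_nonneg_iff (ContDiffAt.sum hℓ) hSpos, leviQuantity_fun_sum _ hℓ,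
    hfderiv]
  simp only [_root_.sum_apply]
  exact Finset.univ.sq_sum_add_sq_sum_le_sum_mul_sum (fun j _ => hpos j p hp) fun j hj =>
    (leviQuantity_log_nonneg_iff (hℓ j hj) (hpos j p hp) v).1 (hpsh j p hp v)
end

section
/- Fix ℓ > 0 and let ψ : ℝ → ℂ be a smooth ℓ-periodic function with ∫₀^ℓ ψ(t) dt = 0. Suppose w, v, η : ℝ → ℂ are smooth ℓ-periodic functions with ∫₀^ℓ w = 0 and ∫₀^ℓ v = 0, satisfying −v'' + v = w (so v = L⁻¹w), −w'' + w − v = −ψ'' (so (L − L⁻¹)w = −ψ'', i.e. w = M(ψ) where M = (L − L⁻¹)⁻¹ ∘ (−d²/dt²)), and −η'' + 2η = ψ. Then w = ψ − η on ℝ. (In other words, M = 1 − (2 − d²/dt²)⁻¹ on the orthogonal complement of the constants.) -/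
open Complex
open scoped ContDiff

private lemma periodic_deriv' {f : ℝ → ℂ} {c : ℝ} (hf : Function.Periodic f c) :
    Function.Periodic (deriv f) c := by
  intro t
  have h1 : (fun x : ℝ => f (x + c)) = f := funext fun x => hf x
  have h2 : deriv (fun x : ℝ => f (x + c)) t = deriv f (t + c) := deriv_comp_add_const _ _ _
  rw [h1] at h2
  exact h2.symm

/-- Solution of `f' = a f`. -/
private lemma exp_sol {a : ℂ} {f : ℝ → ℂ} (hf : Differentiable ℝ f)
    (h : ∀ t, deriv f t = a * f t) (t : ℝ) :
    f t = Complex.exp (a * t) * f 0 := by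
  have hg : ∀ s : ℝ, HasDerivAt (fun s : ℝ => Complex.exp (-(a * s)) * f s) 0 s := by
    intro s
    have h1 : HasDerivAt (fun s : ℝ => -(a * (s : ℂ))) (-a) s := by
      have := (Complex.ofRealCLM.hasDerivAt (x := s)).const_mul a
      simpa [Pi.neg_def] using this.neg
    have h2 := h1.cexp
    have h3 := (hf s).hasDerivAt
    have h4 := h2.mul h3
    refine HasDerivAt.congr_deriv h4 ?_
    rw [h s]; ring
  have hconst : ∀ s : ℝ, Complex.exp (-(a * s)) * f s = f 0 := by
    intro s
    have := is_const_of_deriv_eq_zero (fun x => (hg x).differentiableAt)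
      (fun x => (hg x).deriv) s 0
    simpa using this
  have := hconst t
  calc f t = Complex.exp (a * t) * (Complex.exp (-(a * t)) * f t) := by
        rw [← mul_assoc, ← Complex.exp_add]; simp
    _ = Complex.exp (a * t) * f 0 := by rw [this]

private lemma periodic_exp_zero {c ℓ : ℝ} (hc : c ≠ 0) (hℓ : 0 < ℓ) {f : ℝ → ℂ}
    (hper : Function.Periodic f ℓ)
    (hsol : ∀ t : ℝ, f t = Complex.exp ((c : ℂ) * t) * f 0) :
    ∀ t, f t = 0 := by
  have h0 : f 0 = 0 := by
    have h1 : f ℓ = f 0 := by simpa using hper 0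
    rw [hsol ℓ] at h1
    have h2 : (Complex.exp ((c : ℂ) * ℓ) - 1) * f 0 = 0 := by
      rw [sub_mul, h1]; ring
    have h3 : Complex.exp ((c : ℂ) * ℓ) ≠ 1 := by
      rw [show ((c : ℂ) * (ℓ : ℂ)) = ((c * ℓ : ℝ) : ℂ) by push_cast; ring,
        ← Complex.ofReal_exp]
      intro h
      have h4 : Real.exp (c * ℓ) = 1 := by exact_mod_cast h
      have h5 : c * ℓ = 0 := (Real.exp_eq_one_iff _).mp h4
      exact (mul_ne_zero hc hℓ.ne') h5
    rcases mul_eq_zero.mp h2 with h | h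
    · exact absurd (by linear_combination h : Complex.exp ((c : ℂ) * ℓ) = 1) h3
    · exact h
  intro t
  rw [hsol t, h0, mul_zero]

/-- Periodic solutions of `p'' = 2p` vanish. -/
private lemma periodic_pp_two {ℓ : ℝ} (hℓ : 0 < ℓ) {p : ℝ → ℂ}
    (hp : ContDiff ℝ ∞ p) (hper : Function.Periodic p ℓ)
    (heq : ∀ t, deriv (deriv p) t = 2 * p t) : ∀ t, p t = 0 := by
  set s : ℝ := Real.sqrt 2 with hs
  have hs0 : s ≠ 0 := by positivity
  have ha2 : (s : ℂ) * (s : ℂ) = 2 := by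
    rw [← Complex.ofReal_mul, Real.mul_self_sqrt (by norm_num : (0:ℝ) ≤ 2)]
    norm_num
  have hpd : Differentiable ℝ p := (contDiff_infty_iff_deriv.mp hp).1
  have hpd' : Differentiable ℝ (deriv p) :=
    (contDiff_infty_iff_deriv.mp (contDiff_infty_iff_deriv.mp hp).2).1
  set f : ℝ → ℂ := fun t => deriv p t + (s : ℂ) * p t with hf
  have hfdiff : Differentiable ℝ f := hpd'.add (hpd.const_mul _)
  have hfper : Function.Periodic f ℓ := by
    intro t; simp only [hf]; rw [periodic_deriv' hper t, hper t]
  have hfderiv : ∀ t, deriv f t = (s : ℂ) * f t := by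
    intro t
    have h1 : HasDerivAt f (deriv (deriv p) t + (s : ℂ) * deriv p t) t :=
      (hpd' t).hasDerivAt.add (((hpd t).hasDerivAt).const_mul _)
    rw [h1.deriv, heq t, hf]
    linear_combination (-(p t)) * ha2
  have hfzero : ∀ t, f t = 0 :=
    periodic_exp_zero hs0 hℓ hfper (fun t => exp_sol hfdiff hfderiv t)
  -- now deriv p = -s * p
  have hpderiv : ∀ t, deriv p t = ((-s : ℝ) : ℂ) * p t := by
    intro t
    have := hfzero t
    simp only [hf] at this
    push_cast
    linear_combination this
  exact periodic_exp_zero (neg_ne_zero.mpr hs0) hℓ hper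
    (fun t => exp_sol hpd hpderiv t)

/-- Periodic solutions of `q'' = 0` are constant. -/
private lemma periodic_pp_zero {ℓ : ℝ} (hℓ : 0 < ℓ) {q : ℝ → ℂ}
    (hq : ContDiff ℝ ∞ q) (hper : Function.Periodic q ℓ)
    (heq : ∀ t, deriv (deriv q) t = 0) : ∀ t, q t = q 0 := by
  have hqd : Differentiable ℝ q := (contDiff_infty_iff_deriv.mp hq).1
  have hq' : Differentiable ℝ (deriv q) :=
    (contDiff_infty_iff_deriv.mp (contDiff_infty_iff_deriv.mp hq).2).1
  have hc : ∀ t, deriv q t = deriv q 0 := fun t => is_const_of_deriv_eq_zero hq' heq t 0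
  set c : ℂ := deriv q 0 with hcdef
  have hr : ∀ x : ℝ, HasDerivAt (fun t : ℝ => q t - c * t) 0 x := by
    intro x
    have h1 : HasDerivAt (fun t : ℝ => c * (t : ℂ)) c x := by
      simpa using (Complex.ofRealCLM.hasDerivAt (x := x)).const_mul c
    have h2 := (hqd x).hasDerivAt.sub h1
    rw [hc x] at h2
    rw [sub_self] at h2; exact h2
  have hlin : ∀ t : ℝ, q t = q 0 + c * t := by
    intro t
    have := is_const_of_deriv_eq_zero (fun x => (hr x).differentiableAt)
      (fun x => (hr x).deriv) t 0
    simp only [Complex.ofReal_zero, mul_zero, sub_zero] at this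
    linear_combination this
  have hc0 : c = 0 := by
    have h1 : q ℓ = q 0 := by simpa using hper 0
    rw [hlin ℓ] at h1
    have h2 : c * (ℓ : ℂ) = 0 := by linear_combination h1
    have hℓ0 : (ℓ : ℂ) ≠ 0 := by exact_mod_cast hℓ.ne'
    exact (mul_eq_zero.mp h2).resolve_right hℓ0
  intro t
  rw [hlin t, hc0, zero_mul, add_zero]

private lemma hasDerivAt_comb (f g h k : ℝ → ℂ) (a b : ℂ)
    (hf : Differentiable ℝ f) (hg : Differentiable ℝ g) (hh : Differentiable ℝ h)
    (hk : Differentiable ℝ k) (t : ℝ) :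
    HasDerivAt (fun t => f t - g t + a * h t + b * k t)
      (deriv f t - deriv g t + a * deriv h t + b * deriv k t) t :=
  (((hf t).hasDerivAt.sub (hg t).hasDerivAt).add
    (((hh t).hasDerivAt).const_mul a)).add (((hk t).hasDerivAt).const_mul b)

private lemma deriv2_comb (f g h k : ℝ → ℂ) (a b : ℂ)
    (hf : ContDiff ℝ ∞ f) (hg : ContDiff ℝ ∞ g) (hh : ContDiff ℝ ∞ h)
    (hk : ContDiff ℝ ∞ k) (t : ℝ) :
    deriv (deriv (fun t => f t - g t + a * h t + b * k t)) t
      = deriv (deriv f) t - deriv (deriv g) t + a * deriv (deriv h) t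
        + b * deriv (deriv k) t := by
  have hf1 := (contDiff_infty_iff_deriv.mp hf).1
  have hg1 := (contDiff_infty_iff_deriv.mp hg).1
  have hh1 := (contDiff_infty_iff_deriv.mp hh).1
  have hk1 := (contDiff_infty_iff_deriv.mp hk).1
  have hf2 := (contDiff_infty_iff_deriv.mp (contDiff_infty_iff_deriv.mp hf).2).1
  have hg2 := (contDiff_infty_iff_deriv.mp (contDiff_infty_iff_deriv.mp hg).2).1
  have hh2 := (contDiff_infty_iff_deriv.mp (contDiff_infty_iff_deriv.mp hh).2).1
  have hk2 := (contDiff_infty_iff_deriv.mp (contDiff_infty_iff_deriv.mp hk).2).1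
  have e1 : deriv (fun t => f t - g t + a * h t + b * k t)
      = fun t => deriv f t - deriv g t + a * deriv h t + b * deriv k t :=
    funext fun t => (hasDerivAt_comb f g h k a b hf1 hg1 hh1 hk1 t).deriv
  rw [e1]
  exact (hasDerivAt_comb _ _ _ _ a b hf2 hg2 hh2 hk2 t).deriv

/-- On the orthogonal complement of the constants, `M = 1 − (2 − d²/dt²)⁻¹`:
if `ψ` is smooth `ℓ`-periodic with mean zero, and `w, v, η` are smooth `ℓ`-periodic
with mean zero (for `w, v`) satisfying `−v'' + v = w`, `−w'' + w − v = −ψ''` and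
`−η'' + 2η = ψ`, then `w = ψ − η`. -/
theorem M_eq_one_sub_resolvent (ℓ : ℝ) (hℓ : 0 < ℓ)
    (ψ w v η : ℝ → ℂ)
    (hψ : ContDiff ℝ (⊤ : ℕ∞) ψ) (hψper : Function.Periodic ψ ℓ)
    (hψmean : ∫ t in (0:ℝ)..ℓ, ψ t = 0)
    (hw : ContDiff ℝ (⊤ : ℕ∞) w) (hwper : Function.Periodic w ℓ)
    (hwmean : ∫ t in (0:ℝ)..ℓ, w t = 0)
    (hv : ContDiff ℝ (⊤ : ℕ∞) v) (hvper : Function.Periodic v ℓ)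
    (hvmean : ∫ t in (0:ℝ)..ℓ, v t = 0)
    (hη : ContDiff ℝ (⊤ : ℕ∞) η) (hηper : Function.Periodic η ℓ)
    (heqv : ∀ t : ℝ, -deriv (deriv v) t + v t = w t)
    (heqw : ∀ t : ℝ, -deriv (deriv w) t + w t - v t = -deriv (deriv ψ) t)
    (heqη : ∀ t : ℝ, -deriv (deriv η) t + 2 * η t = ψ t) :
    ∀ t : ℝ, w t = ψ t - η t := by
  -- p := w - ψ + 2η - v satisfies p'' = 2p, hence p = 0
  have hPcd : ContDiff ℝ ∞ (fun t => w t - ψ t + 2 * η t + (-1) * v t) :=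
    (((hw.of_le (by simp)).sub (hψ.of_le (by simp))).add (contDiff_const.mul (hη.of_le (by simp)))).add (contDiff_const.mul (hv.of_le (by simp)))
  have hPper : Function.Periodic (fun t => w t - ψ t + 2 * η t + (-1) * v t) ℓ := by
    intro t; simp only [hwper t, hψper t, hηper t, hvper t]
  have hPeq : ∀ t, deriv (deriv (fun t => w t - ψ t + 2 * η t + (-1) * v t)) t
      = 2 * (w t - ψ t + 2 * η t + (-1) * v t) := by
    intro t
    rw [deriv2_comb w ψ η v 2 (-1) (hw.of_le (by simp)) (hψ.of_le (by simp)) (hη.of_le (by simp)) (hv.of_le (by simp)) t]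
    linear_combination - heqw t + heqv t - 2 * heqη t
  have hPzero := periodic_pp_two hℓ hPcd hPper hPeq
  -- q := w - ψ + v satisfies q'' = 0, hence q is constant
  have hQcd : ContDiff ℝ ∞ (fun t => w t - ψ t + 0 * η t + 1 * v t) :=
    (((hw.of_le (by simp)).sub (hψ.of_le (by simp))).add (contDiff_const.mul (hη.of_le (by simp)))).add (contDiff_const.mul (hv.of_le (by simp)))
  have hQper : Function.Periodic (fun t => w t - ψ t + 0 * η t + 1 * v t) ℓ := by
    intro t; simp only [hwper t, hψper t, hηper t, hvper t]
  have hQeq : ∀ t, deriv (deriv (fun t => w t - ψ t + 0 * η t + 1 * v t)) t = 0 := by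
    intro t
    rw [deriv2_comb w ψ η v 0 1 (hw.of_le (by simp)) (hψ.of_le (by simp)) (hη.of_le (by simp)) (hv.of_le (by simp)) t]
    linear_combination - heqw t - heqv t
  have hQconst := periodic_pp_zero hℓ hQcd hQper hQeq
  -- combine: 2 (w - ψ + η) is the constant  c := q 0
  set c : ℂ := w 0 - ψ 0 + 0 * η 0 + 1 * v 0 with hcdef
  have hkey : ∀ t, w t - ψ t + η t = c / 2 := by
    intro t
    have h1 := hPzero t
    have h2 := hQconst t
    have h0 := hPzero 0
    -- h1 : w t - ψ t + 2 η t - v t = 0, h2 : w t - ψ t + v t = c, h0 at 0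
    field_simp
    linear_combination h1 + h2
  -- integrate to show c = 0
  have hηcont : Continuous η := hη.continuous
  have hψcont : Continuous ψ := hψ.continuous
  have hη' : ContDiff ℝ ∞ (deriv η) := (contDiff_infty_iff_deriv.mp (hη.of_le (by simp))).2
  have hη'' : Continuous (deriv (deriv η)) := ((contDiff_infty_iff_deriv.mp hη').2).continuous
  have hintη'' : ∫ t in (0:ℝ)..ℓ, deriv (deriv η) t = 0 := by
    rw [intervalIntegral.integral_deriv_eq_sub
      (fun x _ => ((contDiff_infty_iff_deriv.mp hη').1 x))
      (hη''.intervalIntegrable 0 ℓ)]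
    have := periodic_deriv' hηper 0
    simp only [zero_add] at this
    rw [this, sub_self]
  have hηmean : ∫ t in (0:ℝ)..ℓ, η t = 0 := by
    have hrepr : ∀ t, η t = (ψ t + deriv (deriv η) t) / 2 := by
      intro t; linear_combination (heqη t) / 2
    calc ∫ t in (0:ℝ)..ℓ, η t = ∫ t in (0:ℝ)..ℓ, (ψ t + deriv (deriv η) t) / 2 := by
          simp_rw [hrepr]
      _ = (∫ t in (0:ℝ)..ℓ, (ψ t + deriv (deriv η) t)) / 2 := by
          rw [intervalIntegral.integral_div]
      _ = ((∫ t in (0:ℝ)..ℓ, ψ t) + ∫ t in (0:ℝ)..ℓ, deriv (deriv η) t) / 2 := by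
          rw [intervalIntegral.integral_add (hψcont.intervalIntegrable 0 ℓ)
            (hη''.intervalIntegrable 0 ℓ)]
      _ = 0 := by rw [hψmean, hintη'', add_zero, zero_div]
  have hintconst : ∫ t in (0:ℝ)..ℓ, (w t - ψ t + η t) = (ℓ : ℝ) • (c / 2) := by
    calc ∫ t in (0:ℝ)..ℓ, (w t - ψ t + η t) = ∫ t in (0:ℝ)..ℓ, (c / 2 : ℂ) := by
          simp_rw [hkey]
      _ = (ℓ - 0 : ℝ) • (c / 2) := intervalIntegral.integral_const _
      _ = (ℓ : ℝ) • (c / 2) := by rw [sub_zero]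
  have hintzero : ∫ t in (0:ℝ)..ℓ, (w t - ψ t + η t) = 0 := by
    rw [intervalIntegral.integral_add (f := fun t => w t - ψ t)
        (((hw.continuous).sub hψcont).intervalIntegrable 0 ℓ)
        (hηcont.intervalIntegrable 0 ℓ),
      intervalIntegral.integral_sub ((hw.continuous).intervalIntegrable 0 ℓ)
        (hψcont.intervalIntegrable 0 ℓ),
      hwmean, hψmean, hηmean]
    ring
  have hc0 : c / 2 = 0 := by
    rw [hintzero] at hintconst
    have := hintconst.symm
    rcases smul_eq_zero.mp this with h | h
    · exact absurd h hℓ.ne'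
    · exact h
  intro t
  have := hkey t
  rw [hc0] at this
  linear_combination this
end
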